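/- Let X be a second-countable topological space equipped with its Borel σ-algebra, let Y be a metric space, and let Q and P be Borel probability measures on X with supp(Q) = supp(P). Let ℓᵃ : Y × Y → ℝ be a p-distance (ℓᵃ(y,y') ≥ 0 for all y, y', and ℓᵃ(y,y') = 0 if and only if y = y'), and let ℓ : Y × Y → ℝ be a nonnegative function (the common objective and constraint loss ℓᵒ = ℓᶜ). Let H be a set of continuous functions from X to Y, let G = H, let f : X → Y be Borel measurable, and let ε ≥ 0. Suppose g ∈ G satisfies ∫ ℓ(f(x), g(x)) dQ(x) ≤ ε, all the relevant integrands are measurable, and h ∈ H attains the infimum of h' ↦ ∫ ℓᵃ(g(x), h'(x)) dP(x) over h' ∈ H. Then ∫ ℓ(f(x), h(x)) dQ(x) ≤ ε. (In particular, the optimal value of the expected BODAME problem is at most ε.) -/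

import Mathlib

open MeasureTheory

/-- The topological support of a Borel measure: the set of points all of whose
open neighborhoods have positive measure. -/
def measureSupport {X : Type*} [TopologicalSpace X] [MeasurableSpace X]
    (μ : Measure X) : Set X :=
  {x | ∀ U ∈ nhds x, 0 < μ U}

/-!
Testing the minimality of `h` against `g ∈ H`, whose attack loss vanishes, shows that the attack
loss of `h` integrates to zero; as `ℓᵃ` is a p-distance, `h = g` holds `P`-a.e. Both models are
continuous, so they agree on a closed set of full `P`-measure, which therefore contains
`supp P = supp Q`. The support being `Q`-conull, `h = g` also holds `Q`-a.e., and the objective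
value of `h` equals the constraint value of `g`.
-/

theorem ae_eq_of_lintegral_ofReal_eq_zero {X Y : Type*} [MeasurableSpace X] {μ : Measure X}
    {ℓ : Y → Y → ℝ} (hℓ_nonneg : ∀ y y', 0 ≤ ℓ y y') (hℓ_zero : ∀ y y', ℓ y y' = 0 ↔ y = y')
    {g h : X → Y} (hmeas : AEMeasurable (fun x => ℓ (g x) (h x)) μ)
    (h0 : ∫⁻ x, ENNReal.ofReal (ℓ (g x) (h x)) ∂μ = 0) : g =ᵐ[μ] h := by
  filter_upwards [(lintegral_eq_zero_iff' hmeas.ennreal_ofReal).mp h0] with x hx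
  exact (hℓ_zero _ _).mp (le_antisymm (ENNReal.ofReal_eq_zero.mp hx) (hℓ_nonneg _ _))

section

variable {X : Type*} [TopologicalSpace X] [MeasurableSpace X]

theorem measureSupport_eq_support (μ : Measure X) : measureSupport μ = μ.support := by
  ext x
  exact (Measure.mem_support_iff_forall x).symm

variable [HereditarilyLindelofSpace X] {μ ν : Measure X}

theorem mem_ae_of_isClosed_of_support_subset (hμν : μ.support ⊆ ν.support) {t : Set X}
    (ht : IsClosed t) (htν : t ∈ ae ν) : t ∈ ae μ :=
  Filter.mem_of_superset Measure.support_mem_ae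
    (hμν.trans (Measure.support_subset_of_isClosed ht htν))

theorem Continuous.ae_eq_of_support_subset {Y : Type*} [TopologicalSpace Y] [T2Space Y]
    (hμν : μ.support ⊆ ν.support) {g h : X → Y} (hg : Continuous g) (hh : Continuous h)
    (hgh : g =ᵐ[ν] h) : g =ᵐ[μ] h :=
  mem_ae_of_isClosed_of_support_subset hμν (isClosed_eq hg hh) hgh

end

theorem bodame_almost_zero_optimal_value_general
    {X : Type*} [TopologicalSpace X] [SecondCountableTopology X]
    [MeasurableSpace X]
    {Y : Type*} [MetricSpace Y]
    (Q P : Measure X)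
    (hsupp : measureSupport Q = measureSupport P)
    (ℓa ℓ : Y → Y → ℝ)
    (hℓa_nonneg : ∀ y y', 0 ≤ ℓa y y')
    (hℓa_zero : ∀ y y', ℓa y y' = 0 ↔ y = y')
    (H : Set (X → Y)) (hH : ∀ h ∈ H, Continuous h)
    (f : X → Y)
    (ε : ℝ)
    -- the surrogate model `g ∈ G = H`, feasible for the constraint
    (g : X → Y) (hgH : g ∈ H)
    (hg_feas : ∫⁻ x, ENNReal.ofReal (ℓ (f x) (g x)) ∂Q ≤ ENNReal.ofReal ε)
    -- measurability of the relevant integrands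
    (hmeas_a : ∀ h' ∈ H, Measurable fun x => ℓa (g x) (h' x))
    -- the attacker's model `h` attains the infimum over `H`
    (h : X → Y) (hhH : h ∈ H)
    (hmin : ∀ h' ∈ H, ∫⁻ x, ENNReal.ofReal (ℓa (g x) (h x)) ∂P
              ≤ ∫⁻ x, ENNReal.ofReal (ℓa (g x) (h' x)) ∂P) :
    ∫⁻ x, ENNReal.ofReal (ℓ (f x) (h x)) ∂Q ≤ ENNReal.ofReal ε := by
  have hattack_zero : ∫⁻ x, ENNReal.ofReal (ℓa (g x) (h x)) ∂P = 0 := by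
    refine le_antisymm ((hmin g hgH).trans_eq ?_) zero_le
    simp [(hℓa_zero _ _).mpr rfl]
  have hP : g =ᵐ[P] h :=
    ae_eq_of_lintegral_ofReal_eq_zero hℓa_nonneg hℓa_zero (hmeas_a h hhH).aemeasurable
      hattack_zero
  rw [measureSupport_eq_support, measureSupport_eq_support] at hsupp
  have hQ : g =ᵐ[Q] h := (hH g hgH).ae_eq_of_support_subset hsupp.le (hH h hhH) hP
  calc ∫⁻ x, ENNReal.ofReal (ℓ (f x) (h x)) ∂Q
      = ∫⁻ x, ENNReal.ofReal (ℓ (f x) (g x)) ∂Q :=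
        lintegral_congr_ae (hQ.mono fun x hx => by simp only [hx])
    _ ≤ ENNReal.ofReal ε := hg_feas

/-- **Sufficient condition for almost `0` optimal value (Theorem 1).**
If the attacker's loss `ℓᵃ` is a p-distance, the objective and constraint losses coincide
(`ℓᵒ = ℓᶜ = ℓ`, nonnegative), `supp Q = supp P`, and the attacker's class `H` equals the
defender's surrogate class `G` (a set of continuous functions), then for any feasible
surrogate `g` (i.e. `∫ ℓ(f, g) dQ ≤ ε`) and any attacker model `h` attaining the infimum
of `h' ↦ ∫ ℓᵃ(g, h') dP` over `H`, the objective value satisfies `∫ ℓ(f, h) dQ ≤ ε`.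
Integrals of the nonnegative losses are taken as lower integrals of `ENNReal.ofReal`. -/
theorem bodame_almost_zero_optimal_value
    {X : Type*} [TopologicalSpace X] [SecondCountableTopology X]
    [MeasurableSpace X] [BorelSpace X]
    {Y : Type*} [MetricSpace Y] [MeasurableSpace Y] [BorelSpace Y]
    (Q P : Measure X) [IsProbabilityMeasure Q] [IsProbabilityMeasure P]
    (hsupp : measureSupport Q = measureSupport P)
    (ℓa ℓ : Y → Y → ℝ)
    (hℓa_nonneg : ∀ y y', 0 ≤ ℓa y y')
    (hℓa_zero : ∀ y y', ℓa y y' = 0 ↔ y = y')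
    (hℓ_nonneg : ∀ y y', 0 ≤ ℓ y y')
    (H : Set (X → Y)) (hH : ∀ h ∈ H, Continuous h)
    (f : X → Y) (hf : Measurable f)
    (ε : ℝ) (hε : 0 ≤ ε)
    -- the surrogate model `g ∈ G = H`, feasible for the constraint
    (g : X → Y) (hgH : g ∈ H)
    (hg_feas : ∫⁻ x, ENNReal.ofReal (ℓ (f x) (g x)) ∂Q ≤ ENNReal.ofReal ε)
    -- measurability of the relevant integrands
    (hmeas_a : ∀ h' ∈ H, Measurable fun x => ℓa (g x) (h' x))
    (hmeas_o : ∀ h' ∈ H, Measurable fun x => ℓ (f x) (h' x))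
    -- the attacker's model `h` attains the infimum over `H`
    (h : X → Y) (hhH : h ∈ H)
    (hmin : ∀ h' ∈ H, ∫⁻ x, ENNReal.ofReal (ℓa (g x) (h x)) ∂P
              ≤ ∫⁻ x, ENNReal.ofReal (ℓa (g x) (h' x)) ∂P) :
    ∫⁻ x, ENNReal.ofReal (ℓ (f x) (h x)) ∂Q ≤ ENNReal.ofReal ε :=
  bodame_almost_zero_optimal_value_general Q P hsupp ℓa ℓ hℓa_nonneg hℓa_zero H hH f ε g hgH hg_feas
    hmeas_a h hhH hmin
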